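/- Let g(P) = w_s·log₂(1 + Ψ_s·P) + w_w·log₂(1 + Ψ_w·(q−P)/(1 + Ψ_w·P)) on [0, q/2], where Ψ_s ≥ Ψ_w > 0 and w_w/w_s < Ψ_s/Ψ_w with w_s ≠ w_w. Then the derivative of g vanishes at P = Ω := (w_w·Ψ_w − w_s·Ψ_s)/(Ψ_s·Ψ_w·(w_s − w_w)). -/

import Mathlib

/-!
Since the weak user treats the strong user's signal as noise, its rate is
`log₂((1 + Ψ_w q)/(1 + Ψ_w P))`, so near `Ω` the objective is
`w_s log₂(1 + Ψ_s P) - w_w log₂(1 + Ψ_w P)` plus a constant. Its derivative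
`(w_s Ψ_s/(1 + Ψ_s P) - w_w Ψ_w/(1 + Ψ_w P)) / log 2` vanishes exactly when
`w_s/(1/Ψ_s + P) = w_w/(1/Ψ_w + P)`, a linear equation in `P` whose solution is `Ω`.
-/

open Real Filter

lemma hasDerivAt_logb_one_add_mul {b c x : ℝ} (hx : 1 + c * x ≠ 0) :
    HasDerivAt (fun P => logb b (1 + c * P)) (c / (1 + c * x) / log b) x := by
  have h := ((((hasDerivAt_id x).const_mul c).const_add 1).log hx).div_const (log b)
  rw [mul_one] at h
  exact h

lemma one_add_mul_sub_div_one_add_mul {a q P : ℝ} (hP : 1 + a * P ≠ 0) :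
    1 + a * (q - P) / (1 + a * P) = (1 + a * q) / (1 + a * P) := by
  field_simp
  ring

lemma logb_one_add_interference {b a q P : ℝ} (hq : 1 + a * q ≠ 0) (hP : 1 + a * P ≠ 0) :
    logb b (1 + a * (q - P) / (1 + a * P)) = logb b (1 + a * q) - logb b (1 + a * P) := by
  rw [one_add_mul_sub_div_one_add_mul hP, logb_div hq hP]

lemma hasDerivAt_weighted_rate_sum {Ψs Ψw ws ww q x : ℝ}
    (hs : 1 + Ψs * x ≠ 0) (hw : 1 + Ψw * x ≠ 0) (hq : 1 + Ψw * q ≠ 0) :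
    HasDerivAt (fun P => ws * logb 2 (1 + Ψs * P) +
      ww * logb 2 (1 + Ψw * (q - P) / (1 + Ψw * P)))
      ((ws * Ψs / (1 + Ψs * x) - ww * Ψw / (1 + Ψw * x)) / log 2) x := by
  have hnear : ∀ᶠ P in nhds x, 1 + Ψw * P ≠ 0 :=
    (continuous_const.add (continuous_const.mul continuous_id)).continuousAt.eventually_ne hw
  have hrate := ((hasDerivAt_logb_one_add_mul (b := 2) hs).const_mul ws).add
    (((hasDerivAt_const x (logb 2 (1 + Ψw * q))).sub
      (hasDerivAt_logb_one_add_mul (b := 2) hw)).const_mul ww)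
  refine (hrate.congr_deriv (by ring)).congr_of_eventuallyEq ?_
  filter_upwards [hnear] with P hP
  rw [logb_one_add_interference hq hP]
  rfl

lemma stationarity_of_eq_div {Ψs Ψw ws ww Ω : ℝ} (hΨs : Ψs ≠ 0) (hΨw : Ψw ≠ 0)
    (hne : ws ≠ ww) (hΩ : Ω = (ww * Ψw - ws * Ψs) / (Ψs * Ψw * (ws - ww))) :
    ws * Ψs * (1 + Ψw * Ω) = ww * Ψw * (1 + Ψs * Ω) := by
  have : ws - ww ≠ 0 := sub_ne_zero.mpr hne
  subst hΩ
  field_simp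
  ring

theorem stmt_4_general (Ψs Ψw ws ww q : ℝ) (hΨw : 0 < Ψw) (hΨs : Ψw ≤ Ψs)
    (hne : ws ≠ ww)
    (Ω : ℝ) (hΩ : Ω = (ww * Ψw - ws * Ψs) / (Ψs * Ψw * (ws - ww)))
    (hmem : Ω ∈ Set.Icc 0 (q / 2)) :
    HasDerivAt (fun P : ℝ => ws * Real.logb 2 (1 + Ψs * P) +
      ww * Real.logb 2 (1 + Ψw * (q - P) / (1 + Ψw * P))) 0 Ω := by
  obtain ⟨hΩ0, hΩq⟩ := hmem
  have hΨs0 : 0 < Ψs := hΨw.trans_le hΨs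
  have hs : 0 < 1 + Ψs * Ω := by positivity
  have hw : 0 < 1 + Ψw * Ω := by positivity
  have hq : 0 < 1 + Ψw * q := by nlinarith
  have hstat := stationarity_of_eq_div hΨs0.ne' hΨw.ne' hne hΩ
  convert hasDerivAt_weighted_rate_sum (ws := ws) (ww := ww) hs.ne' hw.ne' hq.ne'
    using 1
  rw [div_sub_div _ _ hs.ne' hw.ne', hstat]
  ring

/-- The derivative of the direct-link NOMA objective
`g(P) = w_s·log₂(1+Ψ_s P) + w_w·log₂(1 + Ψ_w(q−P)/(1+Ψ_w P))`
vanishes at `P = Ω = (w_w Ψ_w − w_s Ψ_s)/(Ψ_s Ψ_w (w_s − w_w))`. -/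
theorem stmt_4 (Ψs Ψw ws ww q : ℝ) (hΨw : 0 < Ψw) (hΨs : Ψw ≤ Ψs)
    (hws : 0 < ws) (hww : 0 < ww) (hne : ws ≠ ww)
    (hratio : ww / ws < Ψs / Ψw)
    (Ω : ℝ) (hΩ : Ω = (ww * Ψw - ws * Ψs) / (Ψs * Ψw * (ws - ww)))
    (hmem : Ω ∈ Set.Icc 0 (q / 2)) :
    HasDerivAt (fun P : ℝ => ws * Real.logb 2 (1 + Ψs * P) +
      ww * Real.logb 2 (1 + Ψw * (q - P) / (1 + Ψw * P))) 0 Ω :=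
  stmt_4_general Ψs Ψw ws ww q hΨw hΨs hne Ω hΩ hmem
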